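/- Let κ > 0, let {q_i}_{i≥1} be an enumeration of the rational numbers, let V = ⋃_{i≥1} (q_i − κ·2^{−(i+1)}, q_i + κ·2^{−(i+1)}), K = ℝ\V, and α = χ_K. Let a < b with b − a > κ and set ū = (1/2)·χ_{[a,b]}. If u ∈ L¹(ℝ) satisfies ‖u − ū‖_{L¹(ℝ)} < ρ for some 0 < ρ < (b−a−κ)/4, then the set B = {x ∈ [a,b] : 1/4 ≤ u(x) ≤ 3/4} has Lebesgue measure m(B) ≥ b − a − 4‖u − ū‖_{L¹} > κ, hence m(K ∩ B) > 0, and the function x ↦ α(x)·u(x)·(1 − u(x)) has infinite total variation on ℝ. -/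

import Mathlib

/-!
By Markov's inequality for `|u - ū|`, `u` stays within `1/4` of `1/2` on all of `[a, b]` except a
set of measure at most `4 ‖u - ū‖₁`, so the band `B` is longer than `κ ≥ m(V)` and `K ∩ B` has
positive measure; in particular it is infinite. At each point of `K ∩ B` the flux `α u (1 - u)` is
at least `3/16`, while between any two such points there is a rational, which lies in `V` where
`α = 0`. Hence the flux oscillates by `3/16` infinitely often.
-/

open MeasureTheory Set Filter Topology

/-- The open set `V = ⋃ᵢ (qᵢ − κ 2^{−(i+1)}, qᵢ + κ 2^{−(i+1)})` covering the
rationals (with the enumeration indexed by `ℕ` starting at `0`). -/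
def Vset (κ : ℝ) (q : ℕ → ℝ) : Set ℝ :=
  ⋃ i : ℕ, Ioo (q i - κ * (2:ℝ)^(-(i:ℤ) - 2)) (q i + κ * (2:ℝ)^(-(i:ℤ) - 2))

/-- The closed, totally disconnected set `K = ℝ \ V`. -/
def Kset (κ : ℝ) (q : ℕ → ℝ) : Set ℝ := (Vset κ q)ᶜ

open Classical in
/-- `α = χ_K`, the characteristic function of `K`. -/
noncomputable def alphaFun (κ : ℝ) (q : ℕ → ℝ) (x : ℝ) : ℝ :=
  if x ∈ Kset κ q then 1 else 0

/-- The initial datum `ū = (1/2) χ_{[a,b]}`. -/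
noncomputable def uBar (a b : ℝ) (x : ℝ) : ℝ :=
  if x ∈ Icc a b then 1/2 else 0

open scoped ENNReal

def Bset (a b : ℝ) (u : ℝ → ℝ) : Set ℝ := {x | x ∈ Icc a b ∧ 1/4 ≤ u x ∧ u x ≤ 3/4}

section Variation

variable {α E : Type*} [LinearOrder α] [PseudoEMetricSpace E]

theorem eVariationOn_eq_top_of_infinite {f : α → E} {S : Set α} (hS : S.Infinite)
    {ε : ℝ≥0∞} (hε : ε ≠ 0)
    (hvar : ∀ x ∈ S, ∀ y ∈ S, x < y → ε ≤ eVariationOn f (Icc x y)) :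
    eVariationOn f univ = ⊤ := by
  have chain : ∀ T : Finset α, ↑T ⊆ S → ∀ a ∈ S, (∀ x ∈ T, x < a) →
      T.card * ε ≤ eVariationOn f (Iic a) := by
    intro T
    induction T using Finset.induction_on_max with
    | empty => simp
    | insert b T hb ih =>
      intro hTS a ha hlt
      have hbS : b ∈ S := hTS (Finset.mem_insert_self b T)
      have hba : b < a := hlt b (Finset.mem_insert_self b T)
      rw [Finset.card_insert_of_notMem fun h => (hb b h).false, Nat.cast_succ, add_mul, one_mul]
      calc T.card * ε + ε
          ≤ eVariationOn f (Iic b) + eVariationOn f (Icc b a) :=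
            add_le_add (ih (fun x hx => hTS (Finset.mem_insert_of_mem hx)) b hbS hb)
              (hvar b hbS a ha hba)
        _ ≤ eVariationOn f (Iic b ∪ Icc b a) :=
            eVariationOn.add_le_union f fun x hx y hy => le_trans hx hy.1
        _ ≤ eVariationOn f (Iic a) :=
            eVariationOn.mono f (union_subset (Iic_subset_Iic.2 hba.le) Icc_subset_Iic_self)
  by_contra hne
  obtain ⟨n, hn⟩ := ENNReal.exists_nat_mul_gt hε hne
  obtain ⟨T, hTS, hcard⟩ := hS.exists_subset_card_eq (n + 1)
  have hT : T.Nonempty := Finset.card_pos.1 (by omega)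
  have hmax := T.max'_mem hT
  refine (hn.trans_le ?_).false
  calc (n : ℝ≥0∞) * ε = (T.erase (T.max' hT)).card * ε := by
        rw [Finset.card_erase_of_mem hmax, hcard, Nat.add_sub_cancel]
    _ ≤ eVariationOn f (Iic (T.max' hT)) :=
        chain _ (fun x hx => hTS (Finset.mem_of_mem_erase hx)) _ (hTS hmax)
          fun x hx => T.lt_max'_of_mem_erase_max' hT hx
    _ ≤ eVariationOn f univ := eVariationOn.mono f (subset_univ _)

end Variation

theorem measure_ge_le_ofReal_integral_div {α : Type*} [MeasurableSpace α] {μ : Measure α}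
    {f : α → ℝ} (hf_nonneg : 0 ≤ᵐ[μ] f) (hf : Integrable f μ) {ε : ℝ} (hε : 0 < ε) :
    μ {x | ε ≤ f x} ≤ ENNReal.ofReal ((∫ x, f x ∂μ) / ε) := by
  rw [← ofReal_measureReal (hf.measure_ge_lt_top hε).ne]
  gcongr
  rw [le_div_iff₀ hε, mul_comm]
  exact mul_meas_ge_le_integral_of_nonneg hf_nonneg hf ε

theorem volume_Vset_le (κ : ℝ) (q : ℕ → ℝ) : volume (Vset κ q) ≤ ENNReal.ofReal κ := by
  calc volume (Vset κ q)
      ≤ ∑' i : ℕ,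
          volume (Ioo (q i - κ * (2:ℝ)^(-(i:ℤ) - 2)) (q i + κ * (2:ℝ)^(-(i:ℤ) - 2))) :=
        measure_iUnion_le _
    _ = ∑' i : ℕ, ENNReal.ofReal κ * (2⁻¹ * 2⁻¹ ^ i) := by
        congr 1 with i
        have hwidth : q i + κ * (2:ℝ)^(-(i:ℤ) - 2) - (q i - κ * (2:ℝ)^(-(i:ℤ) - 2))
            = κ * (2⁻¹ * 2⁻¹ ^ i) := by
          rw [zpow_sub₀ two_ne_zero, zpow_neg, zpow_natCast, inv_pow]
          ring
        rw [Real.volume_Ioo, hwidth, ENNReal.ofReal_mul' (by positivity)]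
        simp [ENNReal.ofReal_mul, ENNReal.ofReal_pow, ENNReal.ofReal_inv_of_pos, ENNReal.inv_pow]
    _ = ENNReal.ofReal κ := by
        rw [ENNReal.tsum_mul_left, ENNReal.tsum_mul_left, ENNReal.tsum_geometric,
          ENNReal.one_sub_inv_two, inv_inv, ENNReal.inv_mul_cancel two_ne_zero ENNReal.ofNat_ne_top,
          mul_one]

theorem self_mem_Vset {κ : ℝ} (hκ : 0 < κ) (q : ℕ → ℝ) (i : ℕ) : q i ∈ Vset κ q := by
  have hr : 0 < κ * (2:ℝ)^(-(i:ℤ) - 2) := by positivity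
  exact mem_iUnion.2 ⟨i, by constructor <;> linarith⟩

theorem volume_Kset_inter_pos {κ : ℝ} (q : ℕ → ℝ) {T : Set ℝ}
    (hT : ENNReal.ofReal κ < volume T) : 0 < volume (Kset κ q ∩ T) := by
  refine pos_iff_ne_zero.2 fun h0 => (hT.trans_le ?_).false
  calc volume T ≤ volume (T ∩ Kset κ q) + volume (T \ Kset κ q) :=
        measure_le_inter_add_sdiff _ _ _
    _ ≤ 0 + volume (Vset κ q) := by
        rw [inter_comm, h0]
        gcongr
        exact fun x hx => not_not.1 hx.2
    _ ≤ ENNReal.ofReal κ := by rw [zero_add]; exact volume_Vset_le κ q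

theorem integrable_uBar (a b : ℝ) : Integrable (uBar a b) := by
  have : uBar a b = (Icc a b).indicator fun _ => (1/2 : ℝ) := by
    funext x; simp [uBar, indicator]
  rw [this]
  exact continuous_const.integrableOn_Icc.integrable_indicator measurableSet_Icc

theorem Icc_subset_Bset_union (a b : ℝ) (u : ℝ → ℝ) :
    Icc a b ⊆ Bset a b u ∪ {x | 1/4 ≤ |u x - uBar a b x|} := by
  intro x hx
  by_cases hband : 1/4 ≤ u x ∧ u x ≤ 3/4
  · exact Or.inl ⟨hx, hband⟩
  · right
    show 1/4 ≤ |u x - uBar a b x|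
    rw [uBar, if_pos hx, le_abs]
    rw [not_and_or, not_le, not_le] at hband
    rcases hband with h | h
    · right; linarith
    · left; linarith

theorem ofReal_sub_le_volume_Bset (a b : ℝ) {u : ℝ → ℝ} (hu : Integrable u) :
    ENNReal.ofReal (b - a - 4 * ∫ x, |u x - uBar a b x|) ≤ volume (Bset a b u) := by
  set I := ∫ x, |u x - uBar a b x|
  have hI : 0 ≤ I := integral_nonneg fun x => abs_nonneg _
  have hfar : volume {x | 1/4 ≤ |u x - uBar a b x|} ≤ ENNReal.ofReal (4 * I) := by
    have := measure_ge_le_ofReal_integral_div (f := fun x => |u x - uBar a b x|)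
      (ae_of_all _ fun x => abs_nonneg _)
      (hu.sub (integrable_uBar a b)).abs (ε := 1/4) (by norm_num)
    rwa [show I / (1/4) = 4 * I by ring] at this
  rw [ENNReal.ofReal_sub _ (by positivity), tsub_le_iff_right, ← Real.volume_Icc]
  calc volume (Icc a b) ≤ volume (Bset a b u ∪ {x | 1/4 ≤ |u x - uBar a b x|}) :=
        measure_mono (Icc_subset_Bset_union a b u)
    _ ≤ volume (Bset a b u) + ENNReal.ofReal (4 * I) :=
        (measure_union_le _ _).trans (add_le_add le_rfl hfar)

theorem alphaFun_eq_zero_of_mem_Vset {κ : ℝ} {q : ℕ → ℝ} {x : ℝ} (hx : x ∈ Vset κ q) :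
    alphaFun κ q x = 0 :=
  if_neg fun h => h hx

theorem flux_ge_of_mem_Kset_inter_Bset {κ : ℝ} {q : ℕ → ℝ} {a b : ℝ} {u : ℝ → ℝ}
    {x : ℝ} (hx : x ∈ Kset κ q ∩ Bset a b u) : 3/16 ≤ alphaFun κ q x * u x * (1 - u x) := by
  obtain ⟨hxK, -, hx1, hx2⟩ := hx
  rw [alphaFun, if_pos hxK, one_mul]
  nlinarith

theorem eVariationOn_flux_eq_top {κ : ℝ} (hκ : 0 < κ) {q : ℕ → ℝ}
    (hq_range : range q = range ((↑) : ℚ → ℝ)) {a b : ℝ} {u : ℝ → ℝ}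
    (hpos : 0 < volume (Kset κ q ∩ Bset a b u)) :
    eVariationOn (fun x => alphaFun κ q x * u x * (1 - u x)) univ = ⊤ := by
  have hinf : (Kset κ q ∩ Bset a b u).Infinite := fun hfin => hpos.ne' (hfin.measure_zero _)
  refine eVariationOn_eq_top_of_infinite hinf (ε := ENNReal.ofReal (3/16)) (by norm_num) ?_
  intro x hx y _ hxy
  obtain ⟨r, hxr, hry⟩ := exists_rat_btwn hxy
  obtain ⟨i, hi⟩ : (r : ℝ) ∈ range q := hq_range ▸ mem_range_self r
  have hr0 : alphaFun κ q r = 0 := alphaFun_eq_zero_of_mem_Vset (hi ▸ self_mem_Vset hκ q i)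
  calc ENNReal.ofReal (3/16)
      ≤ edist (alphaFun κ q x * u x * (1 - u x)) (alphaFun κ q r * u r * (1 - u r)) := by
        rw [hr0, zero_mul, zero_mul, edist_dist, Real.dist_eq, sub_zero]
        exact ENNReal.ofReal_le_ofReal ((flux_ge_of_mem_Kset_inter_Bset hx).trans (le_abs_self _))
    _ ≤ eVariationOn (fun x => alphaFun κ q x * u x * (1 - u x)) (Icc x y) :=
        eVariationOn.edist_le _ ⟨le_rfl, hxy.le⟩ ⟨hxr.le, hry.le⟩

theorem flux_composition_unbounded_variation_general
    (κ : ℝ) (hκ : 0 < κ)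
    (q : ℕ → ℝ)
    (hq_range : Set.range q = Set.range ((↑) : ℚ → ℝ))
    (a b : ℝ)
    (ρ : ℝ) (hρsmall : ρ < (b - a - κ) / 4)
    (u : ℝ → ℝ) (hu : Integrable u)
    (hclose : (∫ x, |u x - uBar a b x|) < ρ) :
    ENNReal.ofReal (b - a - 4 * ∫ x, |u x - uBar a b x|)
      ≤ volume {x | x ∈ Icc a b ∧ 1/4 ≤ u x ∧ u x ≤ 3/4} ∧
    κ < b - a - 4 * ∫ x, |u x - uBar a b x| ∧
    0 < volume (Kset κ q ∩ {x | x ∈ Icc a b ∧ 1/4 ≤ u x ∧ u x ≤ 3/4}) ∧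
    eVariationOn (fun x => alphaFun κ q x * u x * (1 - u x)) Set.univ = ⊤ := by
  have hB : ENNReal.ofReal (b - a - 4 * ∫ x, |u x - uBar a b x|) ≤ volume (Bset a b u) :=
    ofReal_sub_le_volume_Bset a b hu
  have hgap : κ < b - a - 4 * ∫ x, |u x - uBar a b x| := by linarith
  have hKB : 0 < volume (Kset κ q ∩ Bset a b u) :=
    volume_Kset_inter_pos q (((ENNReal.ofReal_lt_ofReal_iff_of_nonneg hκ.le).2 hgap).trans_le hB)
  exact ⟨hB, hgap, hKB, eVariationOn_flux_eq_top hκ hq_range hKB⟩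

/-- Final counterexample of Section 7: if `b − a > κ` and `u ∈ L¹(ℝ)` is
`L¹`-close to `ū = (1/2)χ_{[a,b]}` (within `ρ < (b−a−κ)/4`), then the set
`B = {x ∈ [a,b] : 1/4 ≤ u ≤ 3/4}` has measure `≥ b − a − 4‖u − ū‖_{L¹} > κ`, so
`m(K ∩ B) > 0`, and `x ↦ α(x) u(x)(1−u(x))` has infinite total variation; hence
`ū` is not in the closure of the domain of `A u = (α u(1−u))_x`. -/
theorem flux_composition_unbounded_variation
    (κ : ℝ) (hκ : 0 < κ)
    (q : ℕ → ℝ) (hq_inj : Function.Injective q)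
    (hq_range : Set.range q = Set.range ((↑) : ℚ → ℝ))
    (a b : ℝ) (hab : a < b) (hlen : κ < b - a)
    (ρ : ℝ) (hρpos : 0 < ρ) (hρsmall : ρ < (b - a - κ) / 4)
    (u : ℝ → ℝ) (hu : Integrable u)
    (hclose : (∫ x, |u x - uBar a b x|) < ρ) :
    ENNReal.ofReal (b - a - 4 * ∫ x, |u x - uBar a b x|)
      ≤ volume {x | x ∈ Icc a b ∧ 1/4 ≤ u x ∧ u x ≤ 3/4} ∧
    κ < b - a - 4 * ∫ x, |u x - uBar a b x| ∧
    0 < volume (Kset κ q ∩ {x | x ∈ Icc a b ∧ 1/4 ≤ u x ∧ u x ≤ 3/4}) ∧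
    eVariationOn (fun x => alphaFun κ q x * u x * (1 - u x)) Set.univ = ⊤ :=
  flux_composition_unbounded_variation_general κ hκ q hq_range a b ρ hρsmall u hu hclose
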